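/- The X-shape matrix R_X = (1/√2)·[[1,0,0,0,0,0,0,1],[0,1,0,0,0,0,1,0],[0,0,1,0,0,1,0,0],[0,0,0,1,1,0,0,0],[0,0,0,−1,1,0,0,0],[0,0,−1,0,0,1,0,0],[0,−1,0,0,0,0,1,0],[−1,0,0,0,0,0,0,1]] is a unitary 8×8 matrix satisfying the (2,3,2)-generalized Yang–Baxter equation, i.e., R₁R₂R₁ = R₂R₁R₂ where R₁ = R_X ⊗ I₄ and R₂ = I₄ ⊗ R_X are 32×32 Kronecker products with the 4×4 identity matrix I₄. -/
import Mathlib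

open Matrix Complex
open scoped Kronecker

/-- `R ⊗ I₄`, reindexed as a 32×32 matrix. -/
noncomputable def R1of (R : Matrix (Fin 8) (Fin 8) ℂ) : Matrix (Fin 32) (Fin 32) ℂ :=
  Matrix.reindex finProdFinEquiv finProdFinEquiv (R ⊗ₖ (1 : Matrix (Fin 4) (Fin 4) ℂ))

/-- `I₄ ⊗ R`, reindexed as a 32×32 matrix. -/
noncomputable def R2of (R : Matrix (Fin 8) (Fin 8) ℂ) : Matrix (Fin 32) (Fin 32) ℂ :=
  Matrix.reindex finProdFinEquiv finProdFinEquiv ((1 : Matrix (Fin 4) (Fin 4) ℂ) ⊗ₖ R)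

/-- The (2,3,2)-generalized Yang–Baxter equation. -/
def gYBE232 (R : Matrix (Fin 8) (Fin 8) ℂ) : Prop :=
  R1of R * R2of R * R1of R = R2of R * R1of R * R2of R

namespace XshapeAux

def Mi : Matrix (Fin 8) (Fin 8) ℤ := !![1, 0, 0, 0, 0, 0, 0, 1;
      0, 1, 0, 0, 0, 0, 1, 0;
      0, 0, 1, 0, 0, 1, 0, 0;
      0, 0, 0, 1, 1, 0, 0, 0;
      0, 0, 0, -1, 1, 0, 0, 0;
      0, 0, -1, 0, 0, 1, 0, 0;
      0, -1, 0, 0, 0, 0, 1, 0;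
      -1, 0, 0, 0, 0, 0, 0, 1]

def p1 : Fin 32 → Fin 32 := ![28,29,30,31,24,25,26,27,20,21,22,23,16,17,18,19,12,13,14,15,8,9,10,11,4,5,6,7,0,1,2,3]
def s1 : Fin 32 → ℤ := ![1,1,1,1,1,1,1,1,1,1,1,1,1,1,1,1,-1,-1,-1,-1,-1,-1,-1,-1,-1,-1,-1,-1,-1,-1,-1,-1]
def p2 : Fin 32 → Fin 32 := ![7,6,5,4,3,2,1,0,15,14,13,12,11,10,9,8,23,22,21,20,19,18,17,16,31,30,29,28,27,26,25,24]
def s2 : Fin 32 → ℤ := ![1,1,1,1,-1,-1,-1,-1,1,1,1,1,-1,-1,-1,-1,1,1,1,1,-1,-1,-1,-1,1,1,1,1,-1,-1,-1,-1]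

def Jz : Matrix (Fin 8) (Fin 8) ℤ := Mi - 1

def J1 : Matrix (Fin 32) (Fin 32) ℤ :=
  Matrix.reindex finProdFinEquiv finProdFinEquiv (Jz ⊗ₖ (1 : Matrix (Fin 4) (Fin 4) ℤ))
def J2 : Matrix (Fin 32) (Fin 32) ℤ :=
  Matrix.reindex finProdFinEquiv finProdFinEquiv ((1 : Matrix (Fin 4) (Fin 4) ℤ) ⊗ₖ Jz)

set_option maxRecDepth 1000000 in
set_option maxHeartbeats 4000000 in
theorem hJ1 : J1 = Matrix.of fun i j => if j = p1 i then s1 i else 0 := by decide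

set_option maxRecDepth 1000000 in
set_option maxHeartbeats 4000000 in
theorem hJ2 : J2 = Matrix.of fun i j => if j = p2 i then s2 i else 0 := by decide

set_option maxRecDepth 100000 in
theorem chk1 : ∀ i, p2 (p1 i) = p1 (p2 i) ∧ s1 i * s2 (p1 i) = -(s2 i * s1 (p2 i)) := by decide
set_option maxRecDepth 100000 in
theorem chk2 : ∀ i, p1 (p1 i) = i ∧ s1 i * s1 (p1 i) = -1 := by decide
set_option maxRecDepth 100000 in
theorem chk3 : ∀ i, p2 (p2 i) = i ∧ s2 i * s2 (p2 i) = -1 := by decide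
set_option maxRecDepth 100000 in
theorem hMMT : Mi * Mi.transpose = (2 : ℤ) • 1 := by decide

/-- product of signed permutation matrices -/
theorem perm_mul {n : ℕ} (p q : Fin n → Fin n) (s t : Fin n → ℤ) :
    (Matrix.of fun i j => if j = p i then s i else 0) *
      (Matrix.of fun i j => if j = q i then t i else 0)
    = Matrix.of fun i j => if j = q (p i) then s i * t (p i) else 0 := by
  ext i j
  simp only [Matrix.mul_apply, Matrix.of_apply]
  rw [Finset.sum_eq_single (p i)]
  · simp
  · intro k _ hk
    simp [hk]
  · simp

theorem anti : J1 * J2 = -(J2 * J1) := by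
  rw [hJ1, hJ2, perm_mul, perm_mul]
  ext i j
  have h := chk1 i
  simp only [Matrix.neg_apply, Matrix.of_apply, h.1, h.2]
  split <;> simp

theorem hJ1sq : J1 * J1 = -1 := by
  rw [hJ1, perm_mul]
  ext i j
  have h := chk2 i
  simp only [Matrix.of_apply, h.1, h.2, Matrix.neg_apply, Matrix.one_apply]
  rcases eq_or_ne i j with rfl | hne
  · simp
  · simp [hne, Ne.symm hne]

theorem hJ2sq : J2 * J2 = -1 := by
  rw [hJ2, perm_mul]
  ext i j
  have h := chk3 i
  simp only [Matrix.of_apply, h.1, h.2, Matrix.neg_apply, Matrix.one_apply]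
  rcases eq_or_ne i j with rfl | hne
  · simp
  · simp [hne, Ne.symm hne]

theorem h121 : J1 * J2 * J1 = J2 := by
  rw [anti, neg_mul, mul_assoc, hJ1sq, mul_neg_one, neg_neg]

theorem h212 : J2 * J1 * J2 = J1 := by
  rw [mul_assoc, anti, mul_neg, ← mul_assoc, hJ2sq, neg_mul, one_mul, neg_neg]

theorem intkey : (1 + J1) * (1 + J2) * (1 + J1) = (1 + J2) * (1 + J1) * (1 + J2) := by
  simp only [add_mul, mul_add, one_mul, mul_one, hJ1sq, hJ2sq, h121, h212]
  rw [anti]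
  abel

def φ : Matrix (Fin 8) (Fin 8) ℤ → Matrix (Fin 8) (Fin 8) ℂ := fun X => X.map (Int.cast)

theorem map_R1 (X : Matrix (Fin 8) (Fin 8) ℤ) :
    R1of (X.map Int.cast) =
      (Matrix.reindex finProdFinEquiv finProdFinEquiv
        (X ⊗ₖ (1 : Matrix (Fin 4) (Fin 4) ℤ))).map (Int.cast : ℤ → ℂ) := by
  ext i j
  simp only [R1of, Matrix.reindex_apply, Matrix.submatrix_apply, Matrix.map_apply,
    Matrix.kroneckerMap_apply, Matrix.one_apply]
  split <;> simp

theorem map_R2 (X : Matrix (Fin 8) (Fin 8) ℤ) :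
    R2of (X.map Int.cast) =
      (Matrix.reindex finProdFinEquiv finProdFinEquiv
        ((1 : Matrix (Fin 4) (Fin 4) ℤ) ⊗ₖ X)).map (Int.cast : ℤ → ℂ) := by
  ext i j
  simp only [R2of, Matrix.reindex_apply, Matrix.submatrix_apply, Matrix.map_apply,
    Matrix.kroneckerMap_apply, Matrix.one_apply]
  split <;> simp

theorem R1of_smul (c : ℂ) (X : Matrix (Fin 8) (Fin 8) ℂ) :
    R1of (c • X) = c • R1of X := by
  ext i j
  simp only [R1of, Matrix.reindex_apply, Matrix.submatrix_apply, Matrix.smul_apply,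
    Matrix.kroneckerMap_apply, smul_eq_mul, mul_assoc]

theorem R2of_smul (c : ℂ) (X : Matrix (Fin 8) (Fin 8) ℂ) :
    R2of (c • X) = c • R2of X := by
  ext i j
  simp only [R2of, Matrix.reindex_apply, Matrix.submatrix_apply, Matrix.smul_apply,
    Matrix.kroneckerMap_apply, smul_eq_mul]
  ring

def Mc : Matrix (Fin 8) (Fin 8) ℂ := !![1, 0, 0, 0, 0, 0, 0, 1;
      0, 1, 0, 0, 0, 0, 1, 0;
      0, 0, 1, 0, 0, 1, 0, 0;
      0, 0, 0, 1, 1, 0, 0, 0;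
      0, 0, 0, -1, 1, 0, 0, 0;
      0, 0, -1, 0, 0, 1, 0, 0;
      0, -1, 0, 0, 0, 0, 1, 0;
      -1, 0, 0, 0, 0, 0, 0, 1]

theorem hMc : Mc = Mi.map (Int.cast : ℤ → ℂ) := by
  ext i j
  fin_cases i <;> fin_cases j <;>
    norm_num [Mc, Mi, Matrix.cons_val_succ, Matrix.cons_val_zero]

theorem map_mul32 (X Y : Matrix (Fin 32) (Fin 32) ℤ) :
    (X * Y).map (Int.cast : ℤ → ℂ) = X.map Int.cast * Y.map Int.cast :=
  Matrix.map_mul (f := Int.castRingHom ℂ)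

theorem keyC : R1of Mc * R2of Mc * R1of Mc = R2of Mc * R1of Mc * R2of Mc := by
  have e1 : R1of Mc = ((1 + J1 : Matrix (Fin 32) (Fin 32) ℤ)).map (Int.cast : ℤ → ℂ) := by
    rw [hMc, map_R1]
    have : Mi = 1 + Jz := by simp [Jz]
    rw [this]
    ext i j
    simp [J1, Matrix.add_kronecker, Matrix.one_kronecker_one, Matrix.one_apply,
      EmbeddingLike.apply_eq_iff_eq]
  have e2 : R2of Mc = ((1 + J2 : Matrix (Fin 32) (Fin 32) ℤ)).map (Int.cast : ℤ → ℂ) := by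
    rw [hMc, map_R2]
    have : Mi = 1 + Jz := by simp [Jz]
    rw [this]
    ext i j
    simp [J2, Matrix.kronecker_add, Matrix.one_kronecker_one, Matrix.one_apply,
      EmbeddingLike.apply_eq_iff_eq]
  rw [e1, e2, ← map_mul32, ← map_mul32, ← map_mul32, ← map_mul32, intkey]

end XshapeAux

open XshapeAux in
theorem Xshape_unitary_gYBE232 :
    ((Real.sqrt 2 : ℂ)⁻¹ • !![1, 0, 0, 0, 0, 0, 0, 1;
      0, 1, 0, 0, 0, 0, 1, 0;
      0, 0, 1, 0, 0, 1, 0, 0;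
      0, 0, 0, 1, 1, 0, 0, 0;
      0, 0, 0, -1, 1, 0, 0, 0;
      0, 0, -1, 0, 0, 1, 0, 0;
      0, -1, 0, 0, 0, 0, 1, 0;
      -1, 0, 0, 0, 0, 0, 0, 1]) ∈ Matrix.unitaryGroup (Fin 8) ℂ ∧
    gYBE232 ((Real.sqrt 2 : ℂ)⁻¹ • !![1, 0, 0, 0, 0, 0, 0, 1;
      0, 1, 0, 0, 0, 0, 1, 0;
      0, 0, 1, 0, 0, 1, 0, 0;
      0, 0, 0, 1, 1, 0, 0, 0;
      0, 0, 0, -1, 1, 0, 0, 0;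
      0, 0, -1, 0, 0, 1, 0, 0;
      0, -1, 0, 0, 0, 0, 1, 0;
      -1, 0, 0, 0, 0, 0, 0, 1]) := by
  have hM : (!![1, 0, 0, 0, 0, 0, 0, 1;
      0, 1, 0, 0, 0, 0, 1, 0;
      0, 0, 1, 0, 0, 1, 0, 0;
      0, 0, 0, 1, 1, 0, 0, 0;
      0, 0, 0, -1, 1, 0, 0, 0;
      0, 0, -1, 0, 0, 1, 0, 0;
      0, -1, 0, 0, 0, 0, 1, 0;
      -1, 0, 0, 0, 0, 0, 0, 1] : Matrix (Fin 8) (Fin 8) ℂ) = Mc := rfl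
  rw [hM]
  set c : ℂ := (Real.sqrt 2 : ℂ)⁻¹ with hc
  have hcc : c * c * 2 = 1 := by
    rw [hc, ← mul_inv]
    rw [← Complex.ofReal_mul, Real.mul_self_sqrt (by norm_num)]
    norm_num
  constructor
  · rw [Matrix.mem_unitaryGroup_iff]
    have hstar : star (c • Mc) = c • Mc.conjTranspose := by
      rw [Matrix.star_eq_conjTranspose, Matrix.conjTranspose_smul]
      congr 1
      rw [hc]
      simp [Complex.conj_ofReal]
    rw [hstar, Matrix.smul_mul, Matrix.mul_smul, smul_smul]
    have hMMH : Mc * Mc.conjTranspose = (2 : ℂ) • 1 := by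
      have hH : Mc.conjTranspose = (Mi.transpose).map (Int.cast : ℤ → ℂ) := by
        rw [hMc]
        ext i j
        simp [Matrix.conjTranspose_apply, Matrix.map_apply, Matrix.transpose_apply]
      rw [hH, hMc]
      have hmm : Mi.map (Int.cast : ℤ → ℂ) * Miᵀ.map (Int.cast : ℤ → ℂ)
          = (Mi * Miᵀ).map (Int.cast : ℤ → ℂ) := by
        exact (Matrix.map_mul (f := Int.castRingHom ℂ)).symm
      rw [hmm, hMMT]
      ext i j
      simp only [Matrix.map_apply, Matrix.smul_apply, Matrix.one_apply, smul_eq_mul]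
      split <;> simp
    rw [hMMH, smul_smul, hcc, one_smul]
  · unfold gYBE232
    rw [R1of_smul, R2of_smul]
    simp only [Matrix.smul_mul, Matrix.mul_smul, smul_smul]
    rw [keyC]
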